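/- arXiv:1804.06699 — 4 statements merged into one kernel-verified Lean document; each statement's English description precedes it below -/
import Mathlib

section
/- With the setting of the polyhedron construction: let I = ∩_{i=1}^p B_i (open balls with centers c_i ≠ c), B the closed ball of center c and radius R, and P⁺ = ∩_{i=1}^p H_i where H_i = {x : h_i(x) < 0} with h_i(x) = Σₖ(2xₖ - (cₖ + c_{ik}))(cₖ - c_{ik}) + (R² - R_i²). If P⁺ = ∅, then I ⊆ B. -/
/-! `h_i(x)` is `‖x - c_i‖² - ‖x - c‖² + R² - R_i²`. A point of `I` outside `B` satisfies
`‖x - c_i‖ < R_i` for every `i` and `‖x - c‖ > R ≥ 0`, hence `h_i(x) < 0` for every `i`, i.e. it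
lies in `P⁺`. So `P⁺ = ∅` forces `I ⊆ B`. -/

open Metric MeasureTheory Finset

theorem EuclideanSpace.sum_two_mul_sub_add_mul_sub_eq_dist_sq_sub_dist_sq {ι : Type*} [Fintype ι]
    (x c d : EuclideanSpace ℝ ι) :
    ∑ k, (2 * x k - (c k + d k)) * (c k - d k) = dist x d ^ 2 - dist x c ^ 2 := by
  simp only [EuclideanSpace.dist_eq, Real.sq_sqrt (sum_nonneg fun _ _ => sq_nonneg _),
    Real.dist_eq, sq_abs, ← sum_sub_distrib]
  exact sum_congr rfl fun k _ => by ring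

theorem stmt9_general (n p : ℕ) (c : EuclideanSpace ℝ (Fin n)) (R : ℝ) (hR : 0 < R)
    (ci : Fin p → EuclideanSpace ℝ (Fin n)) (Ri : Fin p → ℝ)
    (hemp : {x : EuclideanSpace ℝ (Fin n) | ∀ i, ∑ k, (2 * x k - (c k + ci i k)) * (c k - ci i k) + (R^2 - (Ri i)^2) < 0} = ∅) :
    (⋂ i, ball (ci i) (Ri i)) ⊆ closedBall c R := by
  intro x hxI
  by_contra hxB
  have hxc : R ^ 2 < dist x c ^ 2 := pow_lt_pow_left₀ (not_le.mp hxB) hR.le two_ne_zero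
  have hxP : ∀ i, ∑ k, (2 * x k - (c k + ci i k)) * (c k - ci i k) + (R^2 - (Ri i)^2) < 0 := by
    intro i
    have hxi : dist x (ci i) ^ 2 < Ri i ^ 2 :=
      pow_lt_pow_left₀ (Set.mem_iInter.mp hxI i) dist_nonneg two_ne_zero
    rw [EuclideanSpace.sum_two_mul_sub_add_mul_sub_eq_dist_sq_sub_dist_sq]
    linarith
  exact (Set.eq_empty_iff_forall_notMem.mp hemp) x hxP

theorem stmt9 (n p : ℕ) (c : EuclideanSpace ℝ (Fin n)) (R : ℝ) (hR : 0 < R)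
    (ci : Fin p → EuclideanSpace ℝ (Fin n)) (Ri : Fin p → ℝ)
    (hci : ∀ i, ci i ≠ c) (hRi : ∀ i, 0 < Ri i)
    (hemp : {x : EuclideanSpace ℝ (Fin n) | ∀ i, ∑ k, (2 * x k - (c k + ci i k)) * (c k - ci i k) + (R^2 - (Ri i)^2) < 0} = ∅) :
    (⋂ i, ball (ci i) (Ri i)) ⊆ closedBall c R :=
  stmt9_general n p c R hR ci Ri hemp
end

section
/- Let B be the closed ball of center c and radius R in ℝⁿ, and B_1',...,B_{q-1}' closed balls with centers c_j' ≠ c and radii R_j'. Define h_j'(x) = Σₖ(2xₖ - (cₖ + c'_{jk}))(cₖ - c'_{jk}) + (R² - R_j'²) and P⁻ = ∩_{j=1}^{q-1} {x : h_j'(x) > 0}. If P⁻ = ∅, then B ⊆ ∪_{j=1}^{q-1} B_j'. -/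
/-! The function `h_j'` is the difference of the powers of `x` with respect to the spheres
`∂B_j'` and `∂B`. A point of `B` has nonpositive power with respect to `∂B`, while a point
outside `B_j'` has positive power with respect to `∂B_j'`; so a point of `B` missed by every
`B_j'` would lie in `P⁻`. -/

open Metric EuclideanGeometry

theorem EuclideanGeometry.Sphere.power_lt_power_of_mem_closedBall_of_notMem {P : Type*}
    [MetricSpace P] {s t : Sphere P} {x : P} (ht : 0 ≤ t.radius)
    (hs : x ∈ closedBall s.center s.radius) (hx : x ∉ closedBall t.center t.radius) :
    s.power x < t.power x := by
  have hs' : dist x s.center ≤ s.radius := mem_closedBall.mp hs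
  calc s.power x ≤ 0 :=
        (Sphere.power_nonpos_iff_dist_center_le_radius (dist_nonneg.trans hs')).mpr hs'
    _ < t.power x :=
        (Sphere.power_pos_iff_radius_lt_dist_center ht).mpr (not_le.mp (mt mem_closedBall.mpr hx))

theorem EuclideanSpace.sum_add_sq_sub_sq_eq_power_sub_power {ι : Type*} [Fintype ι]
    (x c c' : EuclideanSpace ℝ ι) (R R' : ℝ) :
    ∑ k, (2 * x k - (c k + c' k)) * (c k - c' k) + (R ^ 2 - R' ^ 2)
      = (⟨c', R'⟩ : Sphere _).power x - (⟨c, R⟩ : Sphere _).power x := by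
  simp only [Sphere.power, EuclideanSpace.dist_sq_eq, Real.dist_eq, sq_abs]
  have hsum : ∑ k, (2 * x k - (c k + c' k)) * (c k - c' k)
      = ∑ k, (x k - c' k) ^ 2 - ∑ k, (x k - c k) ^ 2 := by
    rw [← Finset.sum_sub_distrib]
    exact Finset.sum_congr rfl fun k _ => by ring
  rw [hsum]
  ring

theorem stmt10_general (n m : ℕ) (c : EuclideanSpace ℝ (Fin n)) (R : ℝ)
    (cj : Fin m → EuclideanSpace ℝ (Fin n)) (Rj : Fin m → ℝ)
    (hRj : ∀ j, 0 < Rj j)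
    (hemp : {x : EuclideanSpace ℝ (Fin n) | ∀ j, 0 < ∑ k, (2 * x k - (c k + cj j k)) * (c k - cj j k) + (R^2 - (Rj j)^2)} = ∅) :
    closedBall c R ⊆ ⋃ j, closedBall (cj j) (Rj j) := by
  intro x hx
  by_contra hnot
  simp only [Set.mem_iUnion, not_exists] at hnot
  refine Set.eq_empty_iff_forall_notMem.mp hemp x fun j => ?_
  rw [EuclideanSpace.sum_add_sq_sub_sq_eq_power_sub_power, sub_pos]
  exact Sphere.power_lt_power_of_mem_closedBall_of_notMem (hRj j).le hx (hnot j)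

theorem stmt10 (n m : ℕ) (c : EuclideanSpace ℝ (Fin n)) (R : ℝ) (hR : 0 < R)
    (cj : Fin m → EuclideanSpace ℝ (Fin n)) (Rj : Fin m → ℝ)
    (hcj : ∀ j, cj j ≠ c) (hRj : ∀ j, 0 < Rj j)
    (hemp : {x : EuclideanSpace ℝ (Fin n) | ∀ j, 0 < ∑ k, (2 * x k - (c k + cj j k)) * (c k - cj j k) + (R^2 - (Rj j)^2)} = ∅) :
    closedBall c R ⊆ ⋃ j, closedBall (cj j) (Rj j) :=
  stmt10_general n m c R cj Rj hRj hemp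
end

section
/- In the setting of the polyhedron P associated with the covering problem (with balls B_1,...,B_p in Λ, balls B_1',...,B_{q-1}' of 𝔘, ball B of center c and radius R, I = ∩B_i, 𝔘 = ∪B_j', U = 𝔘 ∪ B, S = ∂B): if there exist x⁻, x⁺ in the closure Π of P with ‖x⁻ - c‖² < R² < ‖x⁺ - c‖² and P ≠ ∅, then I \ U is nonempty and has strictly positive Lebesgue measure, and I ∩ U also has strictly positive Lebesgue measure. -/
open Metric MeasureTheory Finset

/-!
The functions `h` are affine, so `P` is convex and hence connected. Since `x⁻` and `x⁺` lie in
`Π` strictly inside and outside `S`, `P` has points on both sides of `S`, and therefore a point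
`z ∈ S ∩ P`. On `S` we have `h(z) = ‖z - a‖² - r²` for the sphere `∂B(a, r)` defining `h`, so
`z` lies in the open set `I \ 𝔘`. As `z` is on the boundary of `B`, this open set meets both `B`
and the complement of its closure, which yields nonempty open subsets of `I ∩ U` and `I \ U`.
-/

section RadicalHyperplane

variable {E ι κ : Type*} [NormedAddCommGroup E]

/-- The paper's `h` for the sphere `∂B(a, r)` against `S = ∂B(c, R)`: the difference of the
powers of `x` with respect to the two spheres. -/
def radical (c a : E) (R r : ℝ) (x : E) : ℝ := (‖x - a‖ ^ 2 - r ^ 2) - (‖x - c‖ ^ 2 - R ^ 2)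

def radicalPolyhedron (c : E) (R : ℝ) (ci : ι → E) (Ri : ι → ℝ) (cj : κ → E) (Rj : κ → ℝ) :
    Set E :=
  {x | (∀ i, radical c (ci i) R (Ri i) x < 0) ∧ ∀ j, 0 < radical c (cj j) R (Rj j) x}

section Convexity

variable [InnerProductSpace ℝ E] (c a : E) (R r : ℝ)

theorem radical_eq_inner (x : E) :
    radical c a R r x = innerSL ℝ ((2 : ℝ) • (c - a)) x + (‖a‖ ^ 2 - ‖c‖ ^ 2 + R ^ 2 - r ^ 2) := by
  rw [radical, norm_sub_sq_real, norm_sub_sq_real, innerSL_apply_apply, real_inner_smul_left,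
    inner_sub_left, real_inner_comm c, real_inner_comm a]
  ring

theorem convex_setOf_radical_neg : Convex ℝ {x | radical c a R r x < 0} := by
  simp_rw [radical_eq_inner, ← lt_neg_iff_add_neg]
  exact convex_halfSpace_lt (innerSL ℝ _).isLinear _

theorem convex_setOf_radical_pos : Convex ℝ {x | 0 < radical c a R r x} := by
  simp_rw [radical_eq_inner, ← neg_lt_iff_pos_add]
  exact convex_halfSpace_gt (innerSL ℝ _).isLinear _

theorem convex_radicalPolyhedron (ci : ι → E) (Ri : ι → ℝ) (cj : κ → E) (Rj : κ → ℝ) :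
    Convex ℝ (radicalPolyhedron c R ci Ri cj Rj) := by
  simp only [radicalPolyhedron, Set.ofPred_and, Set.ofPred_forall]
  exact (convex_iInter fun i => convex_setOf_radical_neg _ _ _ _).inter
    (convex_iInter fun j => convex_setOf_radical_pos _ _ _ _)

end Convexity

variable {c a x : E} {R r : ℝ}

theorem radical_of_mem_sphere (hx : x ∈ sphere c R) :
    radical c a R r x = ‖x - a‖ ^ 2 - r ^ 2 := by
  rw [radical, ← mem_sphere_iff_norm.mp hx, sub_self, sub_zero]

theorem mem_ball_of_radical_neg (hx : x ∈ sphere c R) (hr : 0 ≤ r)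
    (h : radical c a R r x < 0) : x ∈ ball a r := by
  rw [radical_of_mem_sphere hx, sub_neg] at h
  exact mem_ball_iff_norm.mpr (lt_of_pow_lt_pow_left₀ 2 hr h)

theorem notMem_closedBall_of_radical_pos (hx : x ∈ sphere c R) (h : 0 < radical c a R r x) :
    x ∉ closedBall a r := by
  rw [radical_of_mem_sphere hx, sub_pos] at h
  exact fun hxa =>
    (mem_closedBall_iff_norm.mp hxa).not_gt (lt_of_pow_lt_pow_left₀ 2 (norm_nonneg _) h)

theorem mem_sdiff_of_mem_radicalPolyhedron_of_mem_sphere {ci : ι → E} {Ri : ι → ℝ} {cj : κ → E} {Rj : κ → ℝ}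
    (hRi : ∀ i, 0 ≤ Ri i) (hx : x ∈ radicalPolyhedron c R ci Ri cj Rj) (hxS : x ∈ sphere c R) :
    x ∈ (⋂ i, ball (ci i) (Ri i)) \ ⋃ j, closedBall (cj j) (Rj j) := by
  simp only [Set.mem_sdiff, Set.mem_iInter, Set.mem_iUnion, not_exists]
  exact ⟨fun i => mem_ball_of_radical_neg hxS (hRi i) (hx.1 i),
    fun j => notMem_closedBall_of_radical_pos hxS (hx.2 j)⟩

end RadicalHyperplane

theorem sum_eq_radical {ι : Type*} [Fintype ι] (c a x : EuclideanSpace ℝ ι) (R r : ℝ) :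
    ∑ k, (2 * x k - (c k + a k)) * (c k - a k) + (R ^ 2 - r ^ 2) = radical c a R r x := by
  have h k : (2 * x k - (c k + a k)) * (c k - a k) = (x k - a k) ^ 2 - (x k - c k) ^ 2 := by ring
  simp only [radical, EuclideanSpace.norm_sq_eq, PiLp.sub_apply, Real.norm_eq_abs, sq_abs, h,
    sum_sub_distrib]
  ring

theorem IsPreconnected.exists_mem_eq_of_mem_closure {X α : Type*} [TopologicalSpace X]
    [LinearOrder α] [TopologicalSpace α] [OrderTopology α] {s : Set X} (hs : IsPreconnected s)
    {f : X → α} (hf : Continuous f) {a b : X} {t : α} (ha : a ∈ closure s) (hb : b ∈ closure s)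
    (hat : f a < t) (htb : t < f b) : ∃ z ∈ s, f z = t := by
  obtain ⟨a', ha', ha's⟩ := mem_closure_iff.mp ha _ (isOpen_Iio.preimage hf) hat
  obtain ⟨b', hb', hb's⟩ := mem_closure_iff.mp hb _ (isOpen_Ioi.preimage hf) htb
  exact hs.intermediate_value ha's hb's hf.continuousOn ⟨ha'.le, hb'.le⟩

section Sphere

variable {E : Type*} [NormedAddCommGroup E] [NormedSpace ℝ E] {O : Set E} {c z : E} {R : ℝ}

theorem IsOpen.inter_ball_nonempty_of_mem_sphere (hO : IsOpen O) (hR : R ≠ 0) (hzO : z ∈ O)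
    (hz : z ∈ sphere c R) : (O ∩ ball c R).Nonempty :=
  mem_closure_iff.mp (frontier_subset_closure (by rwa [frontier_ball c hR])) O hO hzO

theorem IsOpen.sdiff_closedBall_nonempty_of_mem_sphere (hO : IsOpen O) (hR : R ≠ 0) (hzO : z ∈ O)
    (hz : z ∈ sphere c R) : (O \ closedBall c R).Nonempty :=
  mem_closure_iff.mp (frontier_subset_closure (s := (closedBall c R)ᶜ)
    (by rwa [frontier_compl, frontier_closedBall c hR])) O hO hzO

end Sphere

theorem stmt11_general (n p m : ℕ) (c : EuclideanSpace ℝ (Fin n)) (R : ℝ) (hR : 0 < R)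
    (ci : Fin p → EuclideanSpace ℝ (Fin n)) (Ri : Fin p → ℝ)
    (cj : Fin m → EuclideanSpace ℝ (Fin n)) (Rj : Fin m → ℝ)
    (hRi : ∀ i, 0 < Ri i)
    (xm xp : EuclideanSpace ℝ (Fin n))
    (hxm : xm ∈ closure {x | (∀ i, ∑ k, (2 * x k - (c k + ci i k)) * (c k - ci i k) + (R^2 - (Ri i)^2) < 0) ∧ (∀ j, 0 < ∑ k, (2 * x k - (c k + cj j k)) * (c k - cj j k) + (R^2 - (Rj j)^2))})
    (hxp : xp ∈ closure {x | (∀ i, ∑ k, (2 * x k - (c k + ci i k)) * (c k - ci i k) + (R^2 - (Ri i)^2) < 0) ∧ (∀ j, 0 < ∑ k, (2 * x k - (c k + cj j k)) * (c k - cj j k) + (R^2 - (Rj j)^2))})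
    (h1 : ‖xm - c‖^2 < R^2) (h2 : R^2 < ‖xp - c‖^2) :
    ((⋂ i, ball (ci i) (Ri i)) \ ((⋃ j, closedBall (cj j) (Rj j)) ∪ closedBall c R)).Nonempty ∧
    0 < volume ((⋂ i, ball (ci i) (Ri i)) \ ((⋃ j, closedBall (cj j) (Rj j)) ∪ closedBall c R)) ∧
    0 < volume ((⋂ i, ball (ci i) (Ri i)) ∩ ((⋃ j, closedBall (cj j) (Rj j)) ∪ closedBall c R)) := by
  simp only [sum_eq_radical] at hxm hxp
  obtain ⟨z, hzP, hzS⟩ := (convex_radicalPolyhedron c R ci Ri cj Rj).isPreconnected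
    |>.exists_mem_eq_of_mem_closure (continuous_id.dist continuous_const) hxm hxp
      (by rw [dist_eq_norm]; exact lt_of_pow_lt_pow_left₀ 2 hR.le h1)
      (by rw [dist_eq_norm]; exact lt_of_pow_lt_pow_left₀ 2 (norm_nonneg _) h2)
  set O := (⋂ i, ball (ci i) (Ri i)) \ ⋃ j, closedBall (cj j) (Rj j)
  have hO : IsOpen O := (isOpen_iInter_of_finite fun i => isOpen_ball).sdiff
    (isClosed_iUnion_of_finite fun j => isClosed_closedBall)
  have hzO : z ∈ O := mem_sdiff_of_mem_radicalPolyhedron_of_mem_sphere (fun i => (hRi i).le) hzP hzS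
  have hout := hO.sdiff_closedBall_nonempty_of_mem_sphere hR.ne' hzO hzS
  have hin := hO.inter_ball_nonempty_of_mem_sphere hR.ne' hzO hzS
  rw [← Set.sdiff_sdiff]
  refine ⟨hout, (hO.sdiff isClosed_closedBall).measure_pos volume hout, ?_⟩
  refine ((hO.inter isOpen_ball).measure_pos volume hin).trans_le (measure_mono ?_)
  exact Set.inter_subset_inter Set.sdiff_subset fun x hx => Or.inr (ball_subset_closedBall hx)

theorem stmt11 (n p m : ℕ) (c : EuclideanSpace ℝ (Fin n)) (R : ℝ) (hR : 0 < R)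
    (ci : Fin p → EuclideanSpace ℝ (Fin n)) (Ri : Fin p → ℝ)
    (cj : Fin m → EuclideanSpace ℝ (Fin n)) (Rj : Fin m → ℝ)
    (hci : ∀ i, ci i ≠ c) (hcj : ∀ j, cj j ≠ c)
    (hRi : ∀ i, 0 < Ri i) (hRj : ∀ j, 0 < Rj j)
    (xm xp : EuclideanSpace ℝ (Fin n))
    (hxm : xm ∈ closure {x | (∀ i, ∑ k, (2 * x k - (c k + ci i k)) * (c k - ci i k) + (R^2 - (Ri i)^2) < 0) ∧ (∀ j, 0 < ∑ k, (2 * x k - (c k + cj j k)) * (c k - cj j k) + (R^2 - (Rj j)^2))})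
    (hxp : xp ∈ closure {x | (∀ i, ∑ k, (2 * x k - (c k + ci i k)) * (c k - ci i k) + (R^2 - (Ri i)^2) < 0) ∧ (∀ j, 0 < ∑ k, (2 * x k - (c k + cj j k)) * (c k - cj j k) + (R^2 - (Rj j)^2))})
    (hPne : ({x | (∀ i, ∑ k, (2 * x k - (c k + ci i k)) * (c k - ci i k) + (R^2 - (Ri i)^2) < 0) ∧ (∀ j, 0 < ∑ k, (2 * x k - (c k + cj j k)) * (c k - cj j k) + (R^2 - (Rj j)^2))} : Set (EuclideanSpace ℝ (Fin n))).Nonempty)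
    (h1 : ‖xm - c‖^2 < R^2) (h2 : R^2 < ‖xp - c‖^2) :
    ((⋂ i, ball (ci i) (Ri i)) \ ((⋃ j, closedBall (cj j) (Rj j)) ∪ closedBall c R)).Nonempty ∧
    0 < volume ((⋂ i, ball (ci i) (Ri i)) \ ((⋃ j, closedBall (cj j) (Rj j)) ∪ closedBall c R)) ∧
    0 < volume ((⋂ i, ball (ci i) (Ri i)) ∩ ((⋃ j, closedBall (cj j) (Rj j)) ∪ closedBall c R)) :=
  stmt11_general n p m c R hR ci Ri cj Rj hRi xm xp hxm hxp h1 h2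
end

section
/- Let B_1,...,B_p be open balls with centers c_i ≠ c and radii R_i, B the closed ball of center c and radius R, I = ∩ᵢ B_i, and Π = ∩ᵢ {x : h_i(x) ≤ 0} with h_i(x) = (2x − (c + c_i))ᵀ(c − c_i) + (R² − R_i²). If every point of Π lies in B (i.e., Π \ B = ∅), then I ⊆ B. -/
/-! `h_i(x)` is the difference `(‖x - c_i‖² - R_i²) - (‖x - c‖² - R²)` of the powers of `x` with
respect to the spheres `S(c_i, R_i)` and `S(c, R)`. At a point of `I` outside `B` the first power
is negative and the second positive, so every `h_i` is negative there: `I \ B ⊆ Π \ B = ∅`. -/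

open Metric MeasureTheory Finset
open RealInnerProductSpace

theorem inner_two_smul_sub_add_sub {E : Type*} [NormedAddCommGroup E] [InnerProductSpace ℝ E]
    (x a b : E) : ⟪(2 : ℝ) • x - (b + a), b - a⟫ = ‖x - a‖ ^ 2 - ‖x - b‖ ^ 2 := by
  simp only [inner_sub_left, inner_sub_right, inner_add_left, inner_smul_left, norm_sub_sq_real,
    real_inner_self_eq_norm_sq, real_inner_comm a b, RCLike.conj_to_real]
  ring

theorem EuclideanSpace.sum_two_mul_sub_mul_sub {ι : Type*} [Fintype ι]
    (x a b : EuclideanSpace ℝ ι) :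
    ∑ k, (2 * x k - (b k + a k)) * (b k - a k) = ‖x - a‖ ^ 2 - ‖x - b‖ ^ 2 := by
  rw [← inner_two_smul_sub_add_sub, PiLp.inner_apply]
  simp only [PiLp.sub_apply, PiLp.smul_apply, smul_eq_mul, PiLp.add_apply, RCLike.inner_apply,
    Real.ringHom_apply, mul_comm]

theorem sq_norm_sub_sub_sq_neg_of_mem_ball {E : Type*} [SeminormedAddCommGroup E] {x a : E}
    {r : ℝ} (hx : x ∈ ball a r) : ‖x - a‖ ^ 2 - r ^ 2 < 0 := by
  rw [mem_ball_iff_norm] at hx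
  nlinarith [norm_nonneg (x - a)]

theorem sq_norm_sub_sub_sq_pos_of_notMem_closedBall {E : Type*} [SeminormedAddCommGroup E]
    {x b : E} {R : ℝ} (hR : 0 ≤ R) (hx : x ∉ closedBall b R) : 0 < ‖x - b‖ ^ 2 - R ^ 2 := by
  rw [mem_closedBall_iff_norm, not_le] at hx
  nlinarith

theorem stmt17_general (n p : ℕ) (c : EuclideanSpace ℝ (Fin n)) (R : ℝ) (hR : 0 < R)
    (ci : Fin p → EuclideanSpace ℝ (Fin n)) (Ri : Fin p → ℝ)
    (hsub : {x : EuclideanSpace ℝ (Fin n) | ∀ i, ∑ k, (2 * x k - (c k + ci i k)) * (c k - ci i k) + (R^2 - (Ri i)^2) ≤ 0} \ closedBall c R = ∅) :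
    (⋂ i, ball (ci i) (Ri i)) ⊆ closedBall c R := by
  intro x hx
  by_contra hxB
  have hx_mem_Pi :
      ∀ i, ∑ k, (2 * x k - (c k + ci i k)) * (c k - ci i k) + (R^2 - (Ri i)^2) ≤ 0 := by
    intro i
    have hin := sq_norm_sub_sub_sq_neg_of_mem_ball (Set.mem_iInter.mp hx i)
    have hout := sq_norm_sub_sub_sq_pos_of_notMem_closedBall hR.le hxB
    rw [EuclideanSpace.sum_two_mul_sub_mul_sub]
    linarith
  exact Set.eq_empty_iff_forall_notMem.mp hsub x ⟨hx_mem_Pi, hxB⟩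

theorem stmt17 (n p : ℕ) (c : EuclideanSpace ℝ (Fin n)) (R : ℝ) (hR : 0 < R)
    (ci : Fin p → EuclideanSpace ℝ (Fin n)) (Ri : Fin p → ℝ)
    (hci : ∀ i, ci i ≠ c) (hRi : ∀ i, 0 < Ri i)
    (hsub : {x : EuclideanSpace ℝ (Fin n) | ∀ i, ∑ k, (2 * x k - (c k + ci i k)) * (c k - ci i k) + (R^2 - (Ri i)^2) ≤ 0} \ closedBall c R = ∅) :
    (⋂ i, ball (ci i) (Ri i)) ⊆ closedBall c R :=
  stmt17_general n p c R hR ci Ri hsub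
end
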